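/- arXiv:1811.11165 — 4 statements merged into one kernel-verified Lean document; each statement's English description precedes it below -/
import Mathlib

section
/- Let c ≥ 1 and let X be a type. Let T : Fin c → PMF (Fin c) be a label-noise transition kernel, and suppose the c × c real matrix M defined by M i j = ((T i) j : ℝ) is invertible (nonsingular). Define the corruption of a joint distribution p : PMF (X × Fin c) by corrupt p = p.bind (fun z => (T z.2).map (fun j => (z.1, j))), i.e., the clean label is replaced by a noisy label drawn from T independently of the data coordinate. Then for any two joint distributions p q : PMF (X × Fin c), corrupt p = corrupt q if and only if p = q. (This is Theorem 2 of the paper: the generator is optimal, i.e., the noisy-label joint generative distribution equals the noisy-label joint real distribution, if and only if the clean-label joint distributions agree.) -/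
/-!
Over a fixed data point `x`, corruption acts on the row vector of label masses `(p (x, i))ᵢ` by
right multiplication with the transition matrix. These masses are finite, so they are determined
by their real parts, and an invertible matrix acts injectively on real row vectors.
-/

open scoped ENNReal

namespace PMF

variable {X ι : Type*}

noncomputable def corruptLabel (T : ι → PMF ι) (p : PMF (X × ι)) : PMF (X × ι) :=
  p.bind fun z => (T z.2).map fun j => (z.1, j)

noncomputable def transitionMatrix (T : ι → PMF ι) : Matrix ι ι ℝ :=
  Matrix.of fun i j => (T i j).toReal

theorem map_prodMk_apply [DecidableEq X] (q : PMF ι) (a x : X) (j : ι) :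
    q.map (Prod.mk a) (x, j) = if x = a then q j else 0 := by
  classical
  split_ifs with h
  · subst h
    simp [map_apply, tsum_ite_eq']
  · simp [map_apply, h]

theorem corruptLabel_apply (T : ι → PMF ι) (p : PMF (X × ι)) (x : X) (j : ι) :
    corruptLabel T p (x, j) = ∑' i, p (x, i) * T i j := by
  classical
  simp only [corruptLabel, bind_apply, map_prodMk_apply, ENNReal.tsum_prod', mul_ite, mul_zero]
  rw [tsum_eq_single x fun a ha => by simp [ha.symm]]
  simp

theorem toReal_corruptLabel_apply [Fintype ι] (T : ι → PMF ι) (p : PMF (X × ι)) (x : X) :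
    (fun j => (corruptLabel T p (x, j)).toReal)
      = Matrix.vecMul (fun i => (p (x, i)).toReal) (transitionMatrix T) := by
  ext j
  rw [corruptLabel_apply, tsum_fintype, ENNReal.toReal_sum fun i _ =>
    ENNReal.mul_ne_top (apply_ne_top p _) (apply_ne_top _ _)]
  simp [Matrix.vecMul, dotProduct, transitionMatrix]

theorem corruptLabel_injective [Fintype ι] [DecidableEq ι] {T : ι → PMF ι}
    (hT : IsUnit (transitionMatrix T)) :
    Function.Injective (corruptLabel (X := X) T) := by
  intro p q hpq
  ext ⟨x, i⟩
  have hrow : (fun i => (p (x, i)).toReal) = fun i => (q (x, i)).toReal := by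
    apply Matrix.vecMul_injective_of_isUnit hT
    simp only [← toReal_corruptLabel_apply, hpq]
  exact (ENNReal.toReal_eq_toReal_iff' (apply_ne_top p _) (apply_ne_top q _)).1 (congrFun hrow i)

end PMF

theorem corrupt_eq_iff_of_invertible_general {c : ℕ} (X : Type*)
    (T : Fin c → PMF (Fin c))
    (hT : Invertible (Matrix.of fun i j => ((T i) j).toReal))
    (p q : PMF (X × Fin c)) :
    p.bind (fun z => (T z.2).map (fun j => (z.1, j))) =
      q.bind (fun z => (T z.2).map (fun j => (z.1, j))) ↔ p = q :=
  (PMF.corruptLabel_injective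
    (isUnit_of_invertible (Matrix.of fun i j => ((T i) j).toReal))).eq_iff

/-- Theorem 2 of the paper (PMF form): if the label-noise transition matrix is
invertible, then corruption of joint distributions is injective, i.e., the noisy
joint generative distribution equals the noisy joint real distribution iff the
clean joint distributions agree. -/
theorem corrupt_eq_iff_of_invertible {c : ℕ} (hc : 1 ≤ c) (X : Type*)
    (T : Fin c → PMF (Fin c))
    (hT : Invertible (Matrix.of fun i j => ((T i) j).toReal))
    (p q : PMF (X × Fin c)) :
    p.bind (fun z => (T z.2).map (fun j => (z.1, j))) =
      q.bind (fun z => (T z.2).map (fun j => (z.1, j))) ↔ p = q :=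
  corrupt_eq_iff_of_invertible_general X T hT p q
end

section
/- Let X be a measurable space, let c ≥ 1, and let T : Fin c → Fin c → ℝ≥0 be such that the real matrix (fun i j => (T i j : ℝ)) is invertible. Let μ ν : Fin c → Measure X be two families of finite measures. If for every j : Fin c the mixed measures agree, i.e., ∑ i, (T i j) • μ i = ∑ i, (T i j) • ν i (sum over Fin c of scaled measures), then μ i = ν i for every i. (This is the measure-theoretic core of Theorem 2: the clean class-conditional joint measures p̂(x, ŷ = i) are uniquely determined by the noisy class-conditional joint measures p̃(x, ỹ = j) = ∑_i T_{i,j} p̂(x, ŷ = i) when the transition matrix T is nonsingular.) -/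
open MeasureTheory
open scoped NNReal

namespace MeasureTheory.Measure

variable {X ι : Type*} [MeasurableSpace X] [Fintype ι]

theorem real_sum_smul_apply (a : ι → ℝ≥0) (μ : ι → Measure X) [∀ i, IsFiniteMeasure (μ i)]
    (s : Set X) : (∑ i, a i • μ i).real s = ∑ i, (a i : ℝ) * (μ i).real s := by
  simp only [measureReal_def, finsetSum_apply, smul_apply, nnreal_smul_coe_apply]
  rw [ENNReal.toReal_sum fun i _ => ENNReal.mul_ne_top ENNReal.coe_ne_top (measure_ne_top _ _)]
  simp only [ENNReal.toReal_mul, ENNReal.coe_toReal]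

theorem eq_of_sum_smul_eq [DecidableEq ι] (T : ι → ι → ℝ≥0)
    (hT : IsUnit (Matrix.of fun i j => (T i j : ℝ))) (μ ν : ι → Measure X)
    [∀ i, IsFiniteMeasure (μ i)] [∀ i, IsFiniteMeasure (ν i)]
    (h : ∀ j, ∑ i, T i j • μ i = ∑ i, T i j • ν i) : μ = ν := by
  funext i
  ext s -
  have hvec : Matrix.vecMul (fun k => (μ k).real s) (Matrix.of fun i j => (T i j : ℝ)) =
      Matrix.vecMul (fun k => (ν k).real s) (Matrix.of fun i j => (T i j : ℝ)) := by
    funext j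
    simpa only [Matrix.vecMul, dotProduct, Matrix.of_apply, mul_comm, real_sum_smul_apply]
      using congrArg (·.real s) (h j)
  have hs := congrFun (Matrix.vecMul_injective_iff_isUnit.2 hT hvec) i
  exact (measureReal_eq_measureReal_iff (measure_ne_top _ _) (measure_ne_top _ _)).1 hs

end MeasureTheory.Measure

theorem clean_measures_eq_of_noisy_measures_eq_general {X : Type*} [MeasurableSpace X]
    {c : ℕ} (T : Fin c → Fin c → ℝ≥0)
    (hT : Invertible (Matrix.of fun i j => (T i j : ℝ)))
    (μ ν : Fin c → Measure X)
    (hμ : ∀ i, IsFiniteMeasure (μ i)) (hν : ∀ i, IsFiniteMeasure (ν i))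
    (h : ∀ j, ∑ i, (T i j) • μ i = ∑ i, (T i j) • ν i) :
    ∀ i, μ i = ν i :=
  congrFun (Measure.eq_of_sum_smul_eq T (isUnit_of_invertible _) μ ν h)

/-- Measure-theoretic core of Theorem 2: if the noise transition matrix is
invertible, then the clean class-conditional joint measures are uniquely
determined by the noisy mixtures. -/
theorem clean_measures_eq_of_noisy_measures_eq {X : Type*} [MeasurableSpace X]
    {c : ℕ} (hc : 1 ≤ c) (T : Fin c → Fin c → ℝ≥0)
    (hT : Invertible (Matrix.of fun i j => (T i j : ℝ)))
    (μ ν : Fin c → Measure X)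
    (hμ : ∀ i, IsFiniteMeasure (μ i)) (hν : ∀ i, IsFiniteMeasure (ν i))
    (h : ∀ j, ∑ i, (T i j) • μ i = ∑ i, (T i j) • ν i) :
    ∀ i, μ i = ν i :=
  clean_measures_eq_of_noisy_measures_eq_general T hT μ ν hμ hν h
end

section
/- Let c ≥ 1 and let T : Fin c → Fin c → ℝ satisfy: T i j ≥ 0 for all i j, ∑ j, T i j = 1 for each i (row-stochastic), and the matrix T is invertible. Let p q : Fin c → ℝ be probability vectors (all entries nonnegative, summing to 1), and write (Tᵀp)_j = ∑ i, T i j * p i and (Tᵀq)_j = ∑ i, T i j * q i; assume (Tᵀp)_j > 0 and (Tᵀq)_j > 0 for all j. Then the forward-corrected cross-entropy satisfies ∑ j, (Tᵀp)_j * (-Real.log (Tᵀq)_j) ≥ ∑ j, (Tᵀp)_j * (-Real.log (Tᵀp)_j), with equality if and only if q = p. (This is the pointwise content of Theorem 1: at each data point, the unique minimizer of the forward-corrected cross-entropy loss under the noisy label distribution is the clean conditional label distribution.) -/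
/-!
With `a := Tᵀp` and `b := Tᵀq`, the excess of the cross-entropy over the entropy is
`∑ j, b j * klFun (a j / b j)`, where `klFun x = x log x + 1 - x` is nonnegative and vanishes
only at `1`; the correction terms `∑ b - ∑ a` cancel because a row-stochastic `T` preserves total
mass. So the excess is nonnegative and vanishes exactly when `Tᵀq = Tᵀp`, i.e. `q = p` as `T` is
invertible.
-/

open Finset Real InformationTheory

section Gibbs

variable {ι : Type*} [Fintype ι] {a b : ι → ℝ}

lemma mul_klFun_div {x y : ℝ} (hx : x ≠ 0) (hy : y ≠ 0) :
    y * klFun (x / y) = x * (log x - log y) + y - x := by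
  rw [klFun_apply, log_div hx hy]
  field_simp

lemma mul_klFun_div_nonneg {x y : ℝ} (hx : 0 ≤ x) (hy : 0 < y) : 0 ≤ y * klFun (x / y) :=
  mul_nonneg hy.le (klFun_nonneg (div_nonneg hx hy.le))

lemma sum_mul_neg_log_sub_sum_mul_neg_log (ha : ∀ j, 0 < a j) (hb : ∀ j, 0 < b j)
    (hab : ∑ j, a j = ∑ j, b j) :
    ∑ j, a j * -log (b j) - ∑ j, a j * -log (a j) = ∑ j, b j * klFun (a j / b j) := by
  have h : ∑ j, b j * klFun (a j / b j) =
      ∑ j, (a j * -log (b j) - a j * -log (a j)) + (∑ j, b j - ∑ j, a j) := by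
    rw [← sum_sub_distrib, ← sum_add_distrib]
    exact sum_congr rfl fun j _ => by rw [mul_klFun_div (ha j).ne' (hb j).ne']; ring
  rw [h, hab, sub_self, add_zero, sum_sub_distrib]

theorem sum_mul_neg_log_le (ha : ∀ j, 0 < a j) (hb : ∀ j, 0 < b j)
    (hab : ∑ j, a j = ∑ j, b j) :
    ∑ j, a j * -log (a j) ≤ ∑ j, a j * -log (b j) := by
  have hexcess := sum_mul_neg_log_sub_sum_mul_neg_log ha hb hab
  have hnonneg : 0 ≤ ∑ j, b j * klFun (a j / b j) :=
    sum_nonneg fun j _ => mul_klFun_div_nonneg (ha j).le (hb j)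
  linarith

theorem sum_mul_neg_log_eq_iff (ha : ∀ j, 0 < a j) (hb : ∀ j, 0 < b j)
    (hab : ∑ j, a j = ∑ j, b j) :
    ∑ j, a j * -log (b j) = ∑ j, a j * -log (a j) ↔ b = a := by
  rw [← sub_eq_zero, sum_mul_neg_log_sub_sum_mul_neg_log ha hb hab,
    sum_eq_zero_iff_of_nonneg fun j _ => mul_klFun_div_nonneg (ha j).le (hb j), funext_iff]
  refine forall_congr' fun j => ?_
  rw [mul_eq_zero_iff_left (hb j).ne', klFun_eq_zero_iff (div_pos (ha j) (hb j)).le,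
    div_eq_one_iff_eq (hb j).ne', eq_comm]
  simp only [mem_univ, true_implies]

end Gibbs

section NoiseTransition

variable {ι : Type*} [Fintype ι] (T : ι → ι → ℝ)

lemma sum_sum_mul_of_sum_eq_one (hT : ∀ i, ∑ j, T i j = 1) (p : ι → ℝ) :
    ∑ j, ∑ i, T i j * p i = ∑ i, p i := by
  rw [sum_comm]
  simp [← sum_mul, hT]

lemma sum_mul_injective_of_invertible [DecidableEq ι] [Invertible (Matrix.of T)] :
    Function.Injective fun (p : ι → ℝ) j => ∑ i, T i j * p i := by
  intro p q h
  have hvecMul (v : ι → ℝ) : Matrix.vecMul v (Matrix.of T) = fun j => ∑ i, T i j * v i := by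
    ext j
    simp [Matrix.vecMul, dotProduct, mul_comm]
  apply Matrix.vecMul_injective_of_invertible (Matrix.of T)
  simpa only [hvecMul] using h

end NoiseTransition

theorem forward_corrected_cross_entropy_min_general {c : ℕ}
    (T : Fin c → Fin c → ℝ)
    (hTrow : ∀ i, ∑ j, T i j = 1)
    (hTinv : Invertible (Matrix.of T))
    (p q : Fin c → ℝ)
    (hps : ∑ i, p i = 1)
    (hqs : ∑ i, q i = 1)
    (hTp : ∀ j, 0 < ∑ i, T i j * p i) (hTq : ∀ j, 0 < ∑ i, T i j * q i) :
    (∑ j, (∑ i, T i j * p i) * (-Real.log (∑ i, T i j * q i)) ≥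
        ∑ j, (∑ i, T i j * p i) * (-Real.log (∑ i, T i j * p i))) ∧
      ((∑ j, (∑ i, T i j * p i) * (-Real.log (∑ i, T i j * q i)) =
          ∑ j, (∑ i, T i j * p i) * (-Real.log (∑ i, T i j * p i))) ↔ q = p) := by
  have hsum : ∑ j, ∑ i, T i j * p i = ∑ j, ∑ i, T i j * q i := by
    rw [sum_sum_mul_of_sum_eq_one T hTrow, sum_sum_mul_of_sum_eq_one T hTrow, hps, hqs]
  refine ⟨sum_mul_neg_log_le hTp hTq hsum, (sum_mul_neg_log_eq_iff hTp hTq hsum).trans ?_⟩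
  exact ⟨fun h => sum_mul_injective_of_invertible T h, fun h => h ▸ rfl⟩

/-- Pointwise content of Theorem 1: with a row-stochastic invertible transition
matrix `T`, the forward-corrected cross-entropy of a candidate distribution `q`
against the noisy distribution `Tᵀp` is minimized exactly at `q = p`. -/
theorem forward_corrected_cross_entropy_min {c : ℕ} (hc : 1 ≤ c)
    (T : Fin c → Fin c → ℝ)
    (hTnn : ∀ i j, 0 ≤ T i j) (hTrow : ∀ i, ∑ j, T i j = 1)
    (hTinv : Invertible (Matrix.of T))
    (p q : Fin c → ℝ)
    (hp : ∀ i, 0 ≤ p i) (hps : ∑ i, p i = 1)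
    (hq : ∀ i, 0 ≤ q i) (hqs : ∑ i, q i = 1)
    (hTp : ∀ j, 0 < ∑ i, T i j * p i) (hTq : ∀ j, 0 < ∑ i, T i j * q i) :
    (∑ j, (∑ i, T i j * p i) * (-Real.log (∑ i, T i j * q i)) ≥
        ∑ j, (∑ i, T i j * p i) * (-Real.log (∑ i, T i j * p i))) ∧
      ((∑ j, (∑ i, T i j * p i) * (-Real.log (∑ i, T i j * q i)) =
          ∑ j, (∑ i, T i j * p i) * (-Real.log (∑ i, T i j * p i))) ↔ q = p) :=
  forward_corrected_cross_entropy_min_general T hTrow hTinv p q hps hqs hTp hTq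
end

section
/- Let c ≥ 1 and let T : Fin c → Fin c → ℝ satisfy: T i j ≥ 0 for all i j, ∑ j, T i j = 1 for each i (row-stochastic), and the matrix T is invertible. Let X be a finite type and w : X → ℝ with w x ≥ 0 for all x (a weighting of data points). Let P : X → Fin c → ℝ assign to each x a probability vector (entries nonnegative, summing to 1) with (Tᵀ(P x))_j = ∑ i, T i j * P x i > 0 for all j. Then for every Q : X → Fin c → ℝ such that each Q x is a probability vector with (Tᵀ(Q x))_j > 0 for all j, one has ∑ x, w x * ∑ j, (Tᵀ(P x))_j * (-Real.log (Tᵀ(Q x))_j) ≥ ∑ x, w x * ∑ j, (Tᵀ(P x))_j * (-Real.log (Tᵀ(P x))_j); moreover, equality holds if and only if Q x = P x for every x with w x > 0. (This is Theorem 1 of the paper in the finite-data-space setting: minimizing the forward-corrected cross-entropy loss over the noisy labeled distribution recovers, on the support of the data distribution, exactly the clean conditional label distribution.) -/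
/-!
The forward-corrected loss at `x` is the cross-entropy of the noisy label distribution
`Tᵀ (P x)` relative to `Tᵀ (Q x)`. Gibbs' inequality bounds it below by the entropy of `Tᵀ (P x)`,
with equality exactly when `Tᵀ (Q x) = Tᵀ (P x)`; since `T` is invertible, this means
`Q x = P x`. Summing with the nonnegative weights `w x` gives the inequality, and equality of
the sums forces equality at every `x` of positive weight.
-/

open Real InformationTheory

section CrossEntropy

variable {ι : Type*} [Fintype ι]

noncomputable def crossEntropy (p q : ι → ℝ) : ℝ := ∑ j, p j * -log (q j)

lemma mul_log_sub_log_eq {a b : ℝ} (ha : 0 < a) (hb : 0 < b) :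
    a * (log a - log b) = b * klFun (a / b) + (a - b) := by
  rw [klFun_apply, log_div ha.ne' hb.ne']
  field_simp
  ring

lemma crossEntropy_sub_crossEntropy_self {p q : ι → ℝ} (hp : ∀ j, 0 < p j) (hq : ∀ j, 0 < q j)
    (hpq : ∑ j, p j = ∑ j, q j) :
    crossEntropy p q - crossEntropy p p = ∑ j, q j * klFun (p j / q j) := by
  calc crossEntropy p q - crossEntropy p p
      = ∑ j, p j * (log (p j) - log (q j)) := by
        simp only [crossEntropy, ← Finset.sum_sub_distrib]
        exact Finset.sum_congr rfl fun j _ => by ring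
    _ = ∑ j, q j * klFun (p j / q j) + (∑ j, p j - ∑ j, q j) := by
        simp only [mul_log_sub_log_eq (hp _) (hq _), Finset.sum_add_distrib, Finset.sum_sub_distrib]
    _ = ∑ j, q j * klFun (p j / q j) := by rw [hpq, sub_self, add_zero]

lemma crossEntropy_self_le {p q : ι → ℝ} (hp : ∀ j, 0 < p j) (hq : ∀ j, 0 < q j)
    (hpq : ∑ j, p j = ∑ j, q j) : crossEntropy p p ≤ crossEntropy p q := by
  have := crossEntropy_sub_crossEntropy_self hp hq hpq
  have : 0 ≤ ∑ j, q j * klFun (p j / q j) := Finset.sum_nonneg fun j _ =>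
    mul_nonneg (hq j).le (klFun_nonneg (div_pos (hp j) (hq j)).le)
  linarith

lemma crossEntropy_eq_self_iff {p q : ι → ℝ} (hp : ∀ j, 0 < p j) (hq : ∀ j, 0 < q j)
    (hpq : ∑ j, p j = ∑ j, q j) : crossEntropy p q = crossEntropy p p ↔ q = p := by
  rw [← sub_eq_zero, crossEntropy_sub_crossEntropy_self hp hq hpq,
    Finset.sum_eq_zero_iff_of_nonneg fun j _ =>
      mul_nonneg (hq j).le (klFun_nonneg (div_pos (hp j) (hq j)).le)]
  simp only [Finset.mem_univ, true_implies, mul_eq_zero, (hq _).ne', false_or,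
    klFun_eq_zero_iff (div_pos (hp _) (hq _)).le, div_eq_one_iff_eq (hq _).ne', funext_iff]
  exact forall_congr' fun j => eq_comm

end CrossEntropy

section NoisyLabels

variable {ι : Type*} [Fintype ι]

/-- The paper's `Tᵀ p`: the noisy label distribution of the clean one `p`. -/
def noisy (T : ι → ι → ℝ) (p : ι → ℝ) (j : ι) : ℝ := ∑ i, T i j * p i

lemma noisy_eq_vecMul (T : ι → ι → ℝ) (p : ι → ℝ) : noisy T p = Matrix.vecMul p (Matrix.of T) :=
  funext fun _ => Finset.sum_congr rfl fun _ _ => mul_comm _ _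

lemma sum_noisy {T : ι → ι → ℝ} (hT : ∀ i, ∑ j, T i j = 1) (p : ι → ℝ) :
    ∑ j, noisy T p j = ∑ i, p i := by
  simp only [noisy]
  rw [Finset.sum_comm]
  simp only [← Finset.sum_mul, hT, one_mul]

lemma noisy_injective [DecidableEq ι] (T : ι → ι → ℝ) [Invertible (Matrix.of T)] :
    Function.Injective (noisy T) := by
  intro p q h
  rw [noisy_eq_vecMul, noisy_eq_vecMul] at h
  exact Matrix.vecMul_injective_of_invertible _ h

end NoisyLabels

lemma Fintype.sum_mul_eq_sum_mul_iff_of_le {X : Type*} [Fintype X] {w f g : X → ℝ}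
    (hw : ∀ x, 0 ≤ w x) (hfg : ∀ x, f x ≤ g x) :
    ∑ x, w x * g x = ∑ x, w x * f x ↔ ∀ x, 0 < w x → g x = f x := by
  rw [eq_comm, Finset.sum_eq_sum_iff_of_le fun x _ => mul_le_mul_of_nonneg_left (hfg x) (hw x)]
  refine forall_congr' fun x => ?_
  rcases (hw x).eq_or_lt with hwx | hwx
  · simp [← hwx]
  · simp [hwx, hwx.ne', eq_comm]

theorem forward_corrected_loss_min_general {c : ℕ}
    (T : Fin c → Fin c → ℝ)
    (hTrow : ∀ i, ∑ j, T i j = 1)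
    (hTinv : Invertible (Matrix.of T))
    (X : Type*) [Fintype X] (w : X → ℝ) (hw : ∀ x, 0 ≤ w x)
    (P : X → Fin c → ℝ)
    (hPs : ∀ x, ∑ i, P x i = 1)
    (hTP : ∀ x j, 0 < ∑ i, T i j * P x i)
    (Q : X → Fin c → ℝ)
    (hQs : ∀ x, ∑ i, Q x i = 1)
    (hTQ : ∀ x j, 0 < ∑ i, T i j * Q x i) :
    (∑ x, w x * ∑ j, (∑ i, T i j * P x i) * (-Real.log (∑ i, T i j * Q x i)) ≥
        ∑ x, w x * ∑ j, (∑ i, T i j * P x i) * (-Real.log (∑ i, T i j * P x i))) ∧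
      ((∑ x, w x * ∑ j, (∑ i, T i j * P x i) * (-Real.log (∑ i, T i j * Q x i)) =
          ∑ x, w x * ∑ j, (∑ i, T i j * P x i) * (-Real.log (∑ i, T i j * P x i))) ↔
        ∀ x, 0 < w x → Q x = P x) := by
  have hsum (x : X) : ∑ j, noisy T (P x) j = ∑ j, noisy T (Q x) j := by
    rw [sum_noisy hTrow, sum_noisy hTrow, hPs, hQs]
  have heq (x : X) : crossEntropy (noisy T (P x)) (noisy T (Q x)) =
      crossEntropy (noisy T (P x)) (noisy T (P x)) ↔ Q x = P x :=
    (crossEntropy_eq_self_iff (hTP x) (hTQ x) (hsum x)).trans (noisy_injective T).eq_iff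
  have hle (x : X) : crossEntropy (noisy T (P x)) (noisy T (P x)) ≤
      crossEntropy (noisy T (P x)) (noisy T (Q x)) :=
    crossEntropy_self_le (hTP x) (hTQ x) (hsum x)
  change (∑ x, w x * crossEntropy (noisy T (P x)) (noisy T (Q x)) ≥
      ∑ x, w x * crossEntropy (noisy T (P x)) (noisy T (P x))) ∧
    (∑ x, w x * crossEntropy (noisy T (P x)) (noisy T (Q x)) =
      ∑ x, w x * crossEntropy (noisy T (P x)) (noisy T (P x)) ↔ ∀ x, 0 < w x → Q x = P x)
  refine ⟨Finset.sum_le_sum fun x _ => mul_le_mul_of_nonneg_left (hle x) (hw x), ?_⟩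
  rw [Fintype.sum_mul_eq_sum_mul_iff_of_le hw hle]
  exact forall_congr' fun x => imp_congr_right fun _ => heq x

/-- Theorem 1 of the paper (finite data space): minimizing the expected
forward-corrected cross-entropy over the noisy labeled distribution recovers,
on the support of the data distribution, exactly the clean conditional label
distribution. -/
theorem forward_corrected_loss_min {c : ℕ} (hc : 1 ≤ c)
    (T : Fin c → Fin c → ℝ)
    (hTnn : ∀ i j, 0 ≤ T i j) (hTrow : ∀ i, ∑ j, T i j = 1)
    (hTinv : Invertible (Matrix.of T))
    (X : Type*) [Fintype X] (w : X → ℝ) (hw : ∀ x, 0 ≤ w x)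
    (P : X → Fin c → ℝ)
    (hP : ∀ x i, 0 ≤ P x i) (hPs : ∀ x, ∑ i, P x i = 1)
    (hTP : ∀ x j, 0 < ∑ i, T i j * P x i)
    (Q : X → Fin c → ℝ)
    (hQ : ∀ x i, 0 ≤ Q x i) (hQs : ∀ x, ∑ i, Q x i = 1)
    (hTQ : ∀ x j, 0 < ∑ i, T i j * Q x i) :
    (∑ x, w x * ∑ j, (∑ i, T i j * P x i) * (-Real.log (∑ i, T i j * Q x i)) ≥
        ∑ x, w x * ∑ j, (∑ i, T i j * P x i) * (-Real.log (∑ i, T i j * P x i))) ∧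
      ((∑ x, w x * ∑ j, (∑ i, T i j * P x i) * (-Real.log (∑ i, T i j * Q x i)) =
          ∑ x, w x * ∑ j, (∑ i, T i j * P x i) * (-Real.log (∑ i, T i j * P x i))) ↔
        ∀ x, 0 < w x → Q x = P x) :=
  forward_corrected_loss_min_general T hTrow hTinv X w hw P hPs hTP Q hQs hTQ
end
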